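/- Feasibility of simultaneous impersonation at the feature level: let M^{(1)},…,M^{(p)} be matrices whose columns are vectors in ℝ^n, with w columns each and p·w ≤ n, and suppose the family of all p·w columns is linearly independent. Then for any target templates T^{(1)},…,T^{(p)} ∈ {0,1}^w there exists a feature vector F ∈ ℝ^n such that T(F, M^{(ℓ)}) = T^{(ℓ)} for every ℓ ∈ {1,…,p}; in particular, a single feature vector can realize the templates of ⌊n/w⌋ distinct users simultaneously. -/

import Mathlib

/-! If the vectors `v i` are linearly independent, the columns of the matrix with rows `v i` span
`K^ι`, so every prescription of the dot products `F ⬝ᵥ v i` is met by some `F`. Prescribing `1`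
where the target bit is set and `-1` elsewhere fixes every sign, hence every template. -/

/-- The binary template of a feature vector `F ∈ ℝ^n` under a projection matrix
`M` with columns `M_1, …, M_w ∈ ℝ^n`: coordinate `j` is `1` (`true`) iff the
dot product `F·M_j ≥ 0`. -/
noncomputable def template {n w : ℕ} (F : Fin n → ℝ) (M : Matrix (Fin n) (Fin w) ℝ) :
    Fin w → Bool :=
  fun j => decide (0 ≤ ∑ k, F k * M k j)

theorem exists_dotProduct_eq_of_linearIndependent {ι m K : Type*} [Finite ι] [Fintype m]
    [Field K] {v : ι → m → K} (hv : LinearIndependent K v) (d : ι → K) :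
    ∃ F : m → K, ∀ i, F ⬝ᵥ v i = d i := by
  have hd : d ∈ Submodule.span K (Set.range (flip v)) := by
    rw [span_flip_eq_top_iff_linearIndependent.mpr hv]
    exact Submodule.mem_top
  obtain ⟨F, hF⟩ := Submodule.mem_span_range_iff_exists_fun K |>.mp hd
  refine ⟨F, fun i => ?_⟩
  rw [← hF]
  simp [dotProduct, Finset.sum_apply, flip]

theorem template_eq_of_forall_sum_eq {n w : ℕ} {F : Fin n → ℝ} {M : Matrix (Fin n) (Fin w) ℝ}
    {T : Fin w → Bool} (hF : ∀ j, ∑ k, F k * M k j = if T j then 1 else -1) :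
    template F M = T := by
  funext j
  cases hT : T j <;> simp [template, hF j, hT]

theorem simultaneous_impersonation_feasible_general
    {n w p : ℕ}
    (M : Fin p → Matrix (Fin n) (Fin w) ℝ)
    (hM : LinearIndependent ℝ (fun lj : Fin p × Fin w => fun k => M lj.1 k lj.2))
    (T : Fin p → Fin w → Bool) :
    ∃ F : Fin n → ℝ, ∀ ℓ, template F (M ℓ) = T ℓ := by
  obtain ⟨F, hF⟩ := exists_dotProduct_eq_of_linearIndependent hM
    fun lj => if T lj.1 lj.2 then 1 else -1
  exact ⟨F, fun ℓ => template_eq_of_forall_sum_eq fun j => hF (ℓ, j)⟩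

/-- Feasibility of simultaneous impersonation at the feature level: given `p`
matrices `M⁽¹⁾, …, M⁽ᵖ⁾` of `w` columns each, with `p·w ≤ n` and the family of
all `p·w` columns linearly independent, for any target templates
`T⁽¹⁾, …, T⁽ᵖ⁾ ∈ {0,1}^w` there exists a feature vector `F ∈ ℝ^n` realizing all
of them simultaneously: `T(F, M⁽ˡ⁾) = T⁽ˡ⁾` for every `ℓ`. -/
theorem simultaneous_impersonation_feasible
    {n w p : ℕ} (hpw : p * w ≤ n)
    (M : Fin p → Matrix (Fin n) (Fin w) ℝ)
    (hM : LinearIndependent ℝ (fun lj : Fin p × Fin w => fun k => M lj.1 k lj.2))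
    (T : Fin p → Fin w → Bool) :
    ∃ F : Fin n → ℝ, ∀ ℓ, template F (M ℓ) = T ℓ :=
  simultaneous_impersonation_feasible_general M hM T
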